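/- Let n ∈ ℕ and j ∈ ℤ. Then (1/2π) ∫₀^{2π} P_n(cos θ) · cos(jθ) dθ = F̃_{(n+j)/2, n} if |j| ≤ n and n ≡ j (mod 2), and the integral equals 0 otherwise. -/

import Mathlib

/-!
Expanding `P_n(cos θ)` in powers of `cos θ`, everything reduces to the Fourier coefficients of
`cos^m θ`. From `2 cos θ cos jθ = cos (j+1)θ + cos (j-1)θ` these follow Pascal's rule, so
`(1/2π) ∫ cos^m θ cos jθ = C(m, (m+j)/2) / 2^m` when `|j| ≤ m` and `m ≡ j (mod 2)`, and `0`
otherwise. Writing `n = q + r` and `j = q - r`, the coefficient of `P_n` becomes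
`4⁻ⁿ ∑ₖ (-4)^k (2n-2k)! / (k! (n-k)! (q-k)! (r-k)!)`, and this sum is `C(2q,q) C(2r,r)`:
as a function of `r` it satisfies the first-order recurrence of the central binomial
coefficient.
-/

noncomputable section

/-- the Legendre polynomial P_n(ξ) = ∑_{k=0}^{⌊n/2⌋} p_{n,k} ξ^{n-2k} -/
def legP (n : ℕ) (ξ : ℝ) : ℝ :=
  ∑ k ∈ Finset.range (n / 2 + 1),
    ((-1 : ℝ) ^ k / 2 ^ n) * (Nat.factorial (2 * n - 2 * k) : ℝ) /
      ((Nat.factorial k : ℝ) * (Nat.factorial (n - k) : ℝ) * (Nat.factorial (n - 2 * k) : ℝ)) *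
      ξ ^ (n - 2 * k)

/-- F̃_{q,n} = (2q)!(2n-2q)! / (2^{2n} (q!)² ((n-q)!)²) -/
def Ftil (q n : ℕ) : ℝ :=
  ((Nat.factorial (2 * q) : ℝ) * (Nat.factorial (2 * n - 2 * q) : ℝ)) /
    (2 ^ (2 * n) * (Nat.factorial q : ℝ) ^ 2 * (Nat.factorial (n - q) : ℝ) ^ 2)

open Real Finset
open scoped Nat

theorem integral_cos_int_mul (j : ℤ) :
    ∫ θ in (0:ℝ)..(2 * π), cos (j * θ) = if j = 0 then 2 * π else 0 := by
  split_ifs with hj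
  · simp [hj]
  · have hj' : (j : ℝ) ≠ 0 := by exact_mod_cast hj
    rw [intervalIntegral.integral_comp_mul_left (fun x => cos x) hj', integral_cos,
      show (j : ℝ) * (2 * π) = ((2 * j : ℤ) : ℝ) * π by push_cast; ring, sin_int_mul_pi]
    simp

theorem integral_cos_pow_succ_mul_cos (m : ℕ) (j : ℤ) :
    ∫ θ in (0:ℝ)..(2 * π), cos θ ^ (m + 1) * cos (j * θ) =
      ((∫ θ in (0:ℝ)..(2 * π), cos θ ^ m * cos ((j + 1 : ℤ) * θ)) +
        ∫ θ in (0:ℝ)..(2 * π), cos θ ^ m * cos ((j - 1 : ℤ) * θ)) / 2 := by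
  have hint (i : ℤ) :
      IntervalIntegrable (fun θ => cos θ ^ m * cos (i * θ)) MeasureTheory.volume 0 (2 * π) :=
    (by fun_prop : Continuous _).intervalIntegrable _ _
  rw [← intervalIntegral.integral_add (hint _) (hint _), ← intervalIntegral.integral_div]
  congr 1 with θ
  push_cast
  rw [add_mul, sub_mul, one_mul, cos_add, cos_sub, pow_succ]
  ring

theorem integral_cos_pow_mul_cos_eq_zero {m : ℕ} {j : ℤ} (h : ¬(|j| ≤ m ∧ (m - j) % 2 = 0)) :
    ∫ θ in (0:ℝ)..(2 * π), cos θ ^ m * cos (j * θ) = 0 := by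
  rw [abs_le] at h
  induction m generalizing j with
  | zero =>
    simp only [pow_zero, one_mul]
    rw [integral_cos_int_mul, if_neg (by omega)]
  | succ m ih =>
    rw [integral_cos_pow_succ_mul_cos, ih (by omega), ih (by omega), add_zero, zero_div]

theorem integral_cos_pow_mul_cos_sub (p s : ℕ) :
    ∫ θ in (0:ℝ)..(2 * π), cos θ ^ (p + s) * cos (((p - s : ℤ) : ℝ) * θ) =
      2 * π * (p + s).choose p / 2 ^ (p + s) := by
  induction hm : p + s generalizing p s with
  | zero =>
    obtain ⟨rfl, rfl⟩ : p = 0 ∧ s = 0 := by omega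
    simp
  | succ m ih =>
    rw [integral_cos_pow_succ_mul_cos]
    rcases p with _ | p
    · obtain rfl : s = m + 1 := by omega
      rw [show ((0 : ℕ) - (m + 1 : ℕ) + 1 : ℤ) = (0 : ℕ) - (m : ℕ) by omega, ih 0 m (by omega),
        integral_cos_pow_mul_cos_eq_zero]
      · simp only [Nat.choose_zero_right, Nat.cast_one, add_zero, pow_succ]
        ring
      · rw [abs_le]; omega
    · rw [show ((p + 1 : ℕ) - s - 1 : ℤ) = (p : ℕ) - (s : ℕ) by omega, ih p s (by omega)]
      rcases s with _ | s
      · rw [integral_cos_pow_mul_cos_eq_zero, show m = p by omega, Nat.choose_self, Nat.choose_self]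
        · field_simp; ring
        · rw [abs_le]; omega
      · rw [show ((p + 1 : ℕ) - (s + 1 : ℕ) + 1 : ℤ) = (p + 1 : ℕ) - (s : ℕ) by omega,
          ih (p + 1) s (by omega), Nat.choose_succ_succ' m p, Nat.cast_add, pow_succ]
        ring

/-- Junk values via truncated subtraction for `k > min q r`; it is only ever summed over
`k ≤ min q r`. -/
def centralBinomProdTerm (q r k : ℕ) : ℝ :=
  (-4) ^ k * (2 * (q + r - k))! / (k ! * (q + r - k)! * (q - k)! * (r - k)!)

theorem centralBinomProdTerm_comm (q r k : ℕ) :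
    centralBinomProdTerm q r k = centralBinomProdTerm r q k := by
  simp only [centralBinomProdTerm, Nat.add_comm q r, mul_right_comm _ ((q - k)! : ℝ)]

/-- A Zeilberger-type certificate: summed over `k`, the left side telescopes to `(r + 1) S(r + 1)`,
so `S(r) = ∑ₖ centralBinomProdTerm q r k` obeys the recurrence of `r.centralBinom`. -/
theorem centralBinomProdTerm_recurrence {q r k : ℕ} (hk : k ≤ r) (hr : r < q) :
    (r + 1 - k) * centralBinomProdTerm q (r + 1) k +
        (k + 1) * centralBinomProdTerm q (r + 1) (k + 1) =
      2 * (2 * r + 1) * centralBinomProdTerm q r k := by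
  obtain ⟨b, rfl⟩ : ∃ b, r = k + b := ⟨r - k, by omega⟩
  obtain ⟨c, rfl⟩ : ∃ c, q = k + c + 1 := ⟨q - k - 1, by omega⟩
  simp only [centralBinomProdTerm,
    show k + c + 1 + (k + b) - k = k + b + c + 1 by omega,
    show k + c + 1 + (k + b + 1) - k = k + b + c + 1 + 1 by omega,
    show k + c + 1 + (k + b + 1) - (k + 1) = k + b + c + 1 by omega,
    show k + b - k = b by omega, show k + b + 1 - k = b + 1 by omega,
    show k + b + 1 - (k + 1) = b by omega, show k + c + 1 - k = c + 1 by omega,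
    show k + c + 1 - (k + 1) = c by omega, Nat.mul_succ, Nat.factorial_succ]
  push_cast
  field_simp
  ring

theorem sum_centralBinomProdTerm_of_le {q r : ℕ} (h : r ≤ q) :
    ∑ k ∈ range (r + 1), centralBinomProdTerm q r k = q.centralBinom * r.centralBinom := by
  induction r with
  | zero =>
    simp [centralBinomProdTerm, Nat.centralBinom_eq_two_mul_choose,
      Nat.cast_choose ℝ (by omega : q ≤ 2 * q), show 2 * q - q = q by omega]
  | succ r ih =>
    set T := centralBinomProdTerm q (r + 1)
    have hsucc : (r + 1 : ℝ) * ∑ k ∈ range (r + 2), T k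
        = 2 * (2 * r + 1) * ∑ k ∈ range (r + 1), centralBinomProdTerm q r k := calc
      _ = ∑ k ∈ range (r + 2), (r + 1 - k : ℝ) * T k + ∑ k ∈ range (r + 2), (k : ℝ) * T k := by
        rw [mul_sum, ← sum_add_distrib]
        exact sum_congr rfl fun k _ => by ring
      _ = ∑ k ∈ range (r + 1), ((r + 1 - k : ℝ) * T k + (k + 1 : ℝ) * T (k + 1)) := by
        rw [sum_range_succ _ (r + 1), sum_range_succ' (fun k => (k : ℝ) * T k), sum_add_distrib]
        push_cast
        ring
      _ = _ := by
        rw [mul_sum]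
        exact sum_congr rfl fun k hk =>
          centralBinomProdTerm_recurrence (Nat.lt_succ_iff.mp (mem_range.mp hk)) h
    have hcb : (r + 1 : ℝ) * (r + 1).centralBinom = 2 * (2 * r + 1) * r.centralBinom := by
      exact_mod_cast Nat.succ_mul_centralBinom_succ r
    rw [ih (by omega)] at hsucc
    refine mul_left_cancel₀ (by positivity : (r + 1 : ℝ) ≠ 0) ?_
    rw [hsucc]
    linear_combination -(q.centralBinom : ℝ) * hcb

theorem sum_centralBinomProdTerm (q r : ℕ) :
    ∑ k ∈ range (min q r + 1), centralBinomProdTerm q r k = q.centralBinom * r.centralBinom := by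
  rcases le_total r q with h | h
  · rw [min_eq_right h, sum_centralBinomProdTerm_of_le h]
  · simp only [min_eq_left h, centralBinomProdTerm_comm q r, sum_centralBinomProdTerm_of_le h,
      mul_comm]

def legendreCoeff (n k : ℕ) : ℝ :=
  ((-1 : ℝ) ^ k / 2 ^ n) * (2 * n - 2 * k)! / (k ! * (n - k)! * (n - 2 * k)!)

theorem legP_eq_sum (n : ℕ) (ξ : ℝ) :
    legP n ξ = ∑ k ∈ range (n / 2 + 1), legendreCoeff n k * ξ ^ (n - 2 * k) := rfl

theorem integral_legP_mul_cos (n : ℕ) (j : ℤ) :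
    ∫ θ in (0:ℝ)..(2 * π), legP n (cos θ) * cos (j * θ) =
      ∑ k ∈ range (n / 2 + 1),
        legendreCoeff n k * ∫ θ in (0:ℝ)..(2 * π), cos θ ^ (n - 2 * k) * cos (j * θ) := by
  simp_rw [legP_eq_sum, sum_mul, mul_assoc]
  rw [intervalIntegral.integral_finsetSum fun k _ =>
    (by fun_prop : Continuous _).intervalIntegrable _ _]
  simp_rw [intervalIntegral.integral_const_mul]

theorem integral_legP_mul_cos_eq_zero {n : ℕ} {j : ℤ} (h : ¬(|j| ≤ n ∧ (n - j) % 2 = 0)) :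
    ∫ θ in (0:ℝ)..(2 * π), legP n (cos θ) * cos (j * θ) = 0 := by
  rw [integral_legP_mul_cos]
  refine sum_eq_zero fun k hk => ?_
  have hk := mem_range.mp hk
  rw [integral_cos_pow_mul_cos_eq_zero, mul_zero]
  rw [abs_le] at h ⊢
  omega

theorem legendreCoeff_mul_choose {q r k : ℕ} (hk : k ≤ min q r) :
    legendreCoeff (q + r) k * (2 * π * (q + r - 2 * k).choose (q - k) / 2 ^ (q + r - 2 * k)) =
      2 * π / 2 ^ (2 * (q + r)) * centralBinomProdTerm q r k := by
  obtain ⟨a, rfl⟩ : ∃ a, q = k + a := ⟨q - k, by omega⟩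
  obtain ⟨b, rfl⟩ : ∃ b, r = k + b := ⟨r - k, by omega⟩
  have hpow : (2 : ℝ) ^ (2 * (k + a + (k + b))) = 2 ^ (k + a + (k + b)) * 2 ^ (a + b) * 4 ^ k := by
    rw [show (4 : ℝ) = 2 ^ 2 by norm_num, ← pow_mul, ← pow_add, ← pow_add]
    congr 1
    omega
  simp only [legendreCoeff, centralBinomProdTerm, hpow,
    show k + a + (k + b) - 2 * k = a + b by omega, show k + a - k = a by omega,
    show k + b - k = b by omega,
    show 2 * (k + a + (k + b)) - 2 * k = 2 * (k + a + (k + b) - k) by omega,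
    Nat.cast_choose ℝ (Nat.le_add_right a b), Nat.add_sub_cancel_left]
  rw [neg_pow (4 : ℝ)]
  field_simp

theorem integral_legP_mul_cos_sub (q r : ℕ) :
    ∫ θ in (0:ℝ)..(2 * π), legP (q + r) (cos θ) * cos (((q - r : ℤ) : ℝ) * θ) =
      2 * π / 2 ^ (2 * (q + r)) * (q.centralBinom * r.centralBinom) := by
  rw [integral_legP_mul_cos, ← sum_centralBinomProdTerm, mul_sum,
    ← sum_subset (range_subset_range.mpr (by omega : min q r + 1 ≤ (q + r) / 2 + 1))]
  · refine sum_congr rfl fun k hk => ?_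
    have hk : k ≤ min q r := Nat.lt_succ_iff.mp (mem_range.mp hk)
    rw [show q + r - 2 * k = (q - k) + (r - k) by omega,
      show (q - r : ℤ) = (q - k : ℕ) - (r - k : ℕ) by omega, integral_cos_pow_mul_cos_sub,
      ← legendreCoeff_mul_choose hk, show (q - k) + (r - k) = q + r - 2 * k by omega]
  · intro k hk hk'
    rw [integral_cos_pow_mul_cos_eq_zero, mul_zero]
    simp only [mem_range] at hk hk'
    rw [abs_le]
    omega

theorem Ftil_add_eq (q r : ℕ) :
    Ftil q (q + r) = q.centralBinom * r.centralBinom / 2 ^ (2 * (q + r)) := by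
  simp only [Ftil, Nat.centralBinom_eq_two_mul_choose, show 2 * (q + r) - 2 * q = 2 * r by omega,
    Nat.add_sub_cancel_left, Nat.cast_choose ℝ (by omega : q ≤ 2 * q),
    Nat.cast_choose ℝ (by omega : r ≤ 2 * r), show 2 * q - q = q by omega,
    show 2 * r - r = r by omega]
  field_simp

/-- the Fourier coefficients of θ ↦ P_n(cos θ):
(1/2π)∫₀^{2π} P_n(cos θ) cos(jθ) dθ equals F̃_{(n+j)/2,n} when |j| ≤ n and n ≡ j (mod 2),
and 0 otherwise. -/
theorem legendre_fourier_coeff (n : ℕ) (j : ℤ) :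
    (1 / (2 * Real.pi)) * ∫ θ in (0:ℝ)..(2 * Real.pi),
        legP n (Real.cos θ) * Real.cos ((j : ℝ) * θ) =
      if |j| ≤ (n : ℤ) ∧ ((n : ℤ) - j) % 2 = 0 then Ftil ((((n : ℤ) + j) / 2).toNat) n
      else 0 := by
  split_ifs with h
  · obtain ⟨q, r, rfl, rfl⟩ : ∃ q r : ℕ, n = q + r ∧ j = q - r := by
      rw [abs_le] at h
      exact ⟨((n + j) / 2).toNat, ((n - j) / 2).toNat, by omega, by omega⟩
    rw [integral_legP_mul_cos_sub, show ((((q + r : ℕ) : ℤ) + (q - r)) / 2).toNat = q by omega,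
      Ftil_add_eq]
    field_simp
  · rw [integral_legP_mul_cos_eq_zero h, mul_zero]

end
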